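/- arXiv:1208.5920 — 6 statements merged into one kernel-verified Lean document; each statement's English description precedes it below -/
import Mathlib

section
/- Let a > 0 and define q(m,n) = a m^2 + n^2/a for natural numbers m, n. Then there is a constant C > 0 (depending only on a) such that for every real y ≥ 1 there exist natural numbers m, n with 0 ≤ y - q(m,n) ≤ C · y^{1/4}. -/
/-!
Greedy approximation in two steps. Taking `m = ⌊√(x/c)⌋` leaves `0 ≤ x - c m² ≤ 2√(c x)`.
Applied with `c = a` to `y` this leaves a remainder `r ≤ 2√(a y)`, and applied with `c = 1/a`
to `r` it leaves at most `2√(r/a) ≤ 2√(2/√a) · y^{1/4}`.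
-/

lemma exists_nat_sub_mul_sq_le {c x : ℝ} (hc : 0 < c) (hx : 0 ≤ x) :
    ∃ m : ℕ, 0 ≤ x - c * m ^ 2 ∧ x - c * m ^ 2 ≤ 2 * √(c * x) := by
  set t := √(x / c)
  have ht : 0 ≤ t := Real.sqrt_nonneg _
  have hx_eq : x = c * t ^ 2 := by
    rw [Real.sq_sqrt (div_nonneg hx hc.le)]; field_simp
  have hct : √(c * x) = c * t := by
    rw [hx_eq, ← mul_assoc, ← sq, Real.sqrt_mul (sq_nonneg c), Real.sqrt_sq hc.le,
      Real.sqrt_sq ht]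
  have hm_le : (⌊t⌋₊ : ℝ) ≤ t := Nat.floor_le ht
  have hm_gt : t < ⌊t⌋₊ + 1 := Nat.lt_floor_add_one t
  refine ⟨⌊t⌋₊, ?_, ?_⟩
  · rw [hx_eq, ← mul_sub]
    exact mul_nonneg hc.le (sub_nonneg.2 (pow_le_pow_left₀ (Nat.cast_nonneg _) hm_le 2))
  · -- `t² - m² = (t - m)(t + m)` with `t - m < 1` and `t + m ≤ 2t`
    rw [hct, hx_eq, ← mul_sub, mul_left_comm]
    gcongr
    nlinarith

lemma exists_nat_sub_norm_le {a y : ℝ} (ha : 0 < a) (hy : 0 ≤ y) :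
    ∃ m n : ℕ, 0 ≤ y - (a * m ^ 2 + n ^ 2 / a) ∧
      y - (a * m ^ 2 + n ^ 2 / a) ≤ 2 * √(2 / √a) * √(√y) := by
  obtain ⟨m, hr_nonneg, hr_le⟩ := exists_nat_sub_mul_sq_le ha hy
  obtain ⟨n, hs_nonneg, hs_le⟩ := exists_nat_sub_mul_sq_le (inv_pos.2 ha) hr_nonneg
  have hsa : 0 < √a := Real.sqrt_pos.2 ha
  have hr_div : a⁻¹ * (y - a * m ^ 2) ≤ 2 / √a * √y := by
    calc a⁻¹ * (y - a * m ^ 2) ≤ a⁻¹ * (2 * √(a * y)) := by gcongr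
      _ = 2 / √a * √y := by
        rw [Real.sqrt_mul ha.le]
        field_simp
        rw [Real.sq_sqrt ha.le]
  have hq : y - (a * m ^ 2 + n ^ 2 / a) = y - a * m ^ 2 - a⁻¹ * n ^ 2 := by ring
  refine ⟨m, n, hq ▸ hs_nonneg, hq ▸ hs_le.trans ?_⟩
  rw [mul_assoc, ← Real.sqrt_mul (by positivity)]
  gcongr

lemma sqrt_sqrt_eq_rpow {y : ℝ} (hy : 0 ≤ y) : √(√y) = y ^ (1 / 4 : ℝ) := by
  rw [Real.sqrt_eq_rpow, Real.sqrt_eq_rpow, ← Real.rpow_mul hy]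
  norm_num

theorem stmt_3 (a : ℝ) (ha : 0 < a) :
    ∃ C : ℝ, 0 < C ∧ ∀ y : ℝ, 1 ≤ y → ∃ m n : ℕ,
      0 ≤ y - (a * m ^ 2 + n ^ 2 / a) ∧
      y - (a * m ^ 2 + n ^ 2 / a) ≤ C * y ^ ((1 : ℝ) / 4) := by
  refine ⟨2 * √(2 / √a), by positivity, fun y hy => ?_⟩
  have hy0 : 0 ≤ y := zero_le_one.trans hy
  rw [← sqrt_sqrt_eq_rpow hy0]
  exact exists_nat_sub_norm_le ha hy0
end

section
/- Let (λ_j) and (d_j) be sequences of nonnegative reals with λ_j → ∞, and suppose there exist constants C, C' > 0 with d_j ≤ C·λ_j^{1/4} for all j ≥ 1 and #{j : λ_j ≤ x} ≤ C'·x for all x ≥ 1. Then as β → 0+, the sum ∑_j d_j e^{-β λ_j} (1 - (1 - e^{-β d_j})/(β d_j)) is O(β^{-1/2}). -/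
/-!
Since `0 ≤ 1 - (1 - e^{-t}) / t ≤ t / 2` for `t > 0`, the `j`-th term is at most
`(β / 2) d_j² e^{-β λ_j} ≤ (C² / 2) β √λ_j e^{-β λ_j} ≤ (C² / 2) √β e^{-β λ_j / 2}`,
the last step because `√(β λ) ≤ e^{β λ / 2}`. A linear bound on the counting function gives
`∑_j e^{-b λ_j} = O(1 / b)` for `0 < b ≤ 1`, so the whole sum is `O(√β / β) = O(β^{-1/2})`.
-/

open Filter MeasureTheory Topology Asymptotics

open Finset Real

def LinearCounting {ι : Type*} (l : ι → ℝ) (C' : ℝ) : Prop :=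
  ∀ x : ℝ, 1 ≤ x → ∀ s : Finset ι, (∀ j ∈ s, l j ≤ x) → (s.card : ℝ) ≤ C' * x

lemma summable_natCast_add_one_mul_exp_neg :
    Summable fun k : ℕ => ((k : ℝ) + 1) * exp (-k) := by
  refine ((summable_pow_mul_exp_neg_nat_mul 1 one_pos).add
    (summable_pow_mul_exp_neg_nat_mul 0 one_pos)).congr fun k => ?_
  simp only [pow_one, pow_zero, neg_mul, one_mul]
  ring

namespace LinearCounting

variable {ι : Type*} {l : ι → ℝ} {C' b : ℝ}

lemma nonneg (h : LinearCounting l C') : 0 ≤ C' := by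
  simpa using h 1 le_rfl ∅ (by simp)

/-- Grouping the `j` by `k = ⌊b λ_j⌋`, the `k`-th group has at most `C' (k + 1) / b` members,
each contributing at most `e^{-k}`. -/
lemma sum_exp_neg_mul_le (h : LinearCounting l C') (hl : ∀ j, 0 ≤ l j) (hb0 : 0 < b)
    (hb1 : b ≤ 1) (s : Finset ι) :
    ∑ j ∈ s, exp (-b * l j) ≤ C' * (∑' k : ℕ, ((k : ℝ) + 1) * exp (-k)) / b := by
  classical
  set g : ι → ℕ := fun j => ⌊b * l j⌋₊
  have hfiber : ∀ k : ℕ, (#{j ∈ s | g j = k} : ℝ) ≤ C' * ((k + 1) / b) := by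
    intro k
    refine h _ ?_ _ fun j hj => ?_
    · rw [le_div_iff₀ hb0]; linarith
    · rw [le_div_iff₀ hb0, mul_comm]
      have hk : ⌊b * l j⌋₊ = k := (mem_filter.mp hj).2
      exact hk ▸ (Nat.lt_floor_add_one (b * l j)).le
  calc ∑ j ∈ s, exp (-b * l j)
      ≤ ∑ j ∈ s, exp (-(g j : ℝ)) := by
        gcongr with j
        rw [neg_mul, neg_le_neg_iff]
        exact Nat.floor_le (mul_nonneg hb0.le (hl j))
    _ = ∑ k ∈ s.image g, #{j ∈ s | g j = k} • exp (-(k : ℝ)) :=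
        sum_comp (fun k : ℕ => exp (-(k : ℝ))) g
    _ ≤ ∑ k ∈ s.image g, C' * ((k + 1) / b) * exp (-(k : ℝ)) := by
        simp only [nsmul_eq_mul]
        gcongr with k
        exact hfiber k
    _ = C' / b * ∑ k ∈ s.image g, ((k : ℝ) + 1) * exp (-k) := by
        rw [mul_sum]; exact sum_congr rfl fun k _ => by ring
    _ ≤ C' / b * ∑' k : ℕ, ((k : ℝ) + 1) * exp (-k) := by
        gcongr
        · exact div_nonneg h.nonneg hb0.le
        · exact summable_natCast_add_one_mul_exp_neg.sum_le_tsum _ fun k _ => by positivity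
    _ = C' * (∑' k : ℕ, ((k : ℝ) + 1) * exp (-k)) / b := by ring

lemma summable_exp_neg_mul (h : LinearCounting l C') (hl : ∀ j, 0 ≤ l j) (hb0 : 0 < b)
    (hb1 : b ≤ 1) : Summable fun j => exp (-b * l j) :=
  summable_of_sum_le (fun _ => (exp_pos _).le) (h.sum_exp_neg_mul_le hl hb0 hb1)

lemma tsum_exp_neg_mul_le (h : LinearCounting l C') (hl : ∀ j, 0 ≤ l j) (hb0 : 0 < b)
    (hb1 : b ≤ 1) :
    ∑' j, exp (-b * l j) ≤ C' * (∑' k : ℕ, ((k : ℝ) + 1) * exp (-k)) / b :=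
  Real.tsum_le_of_sum_le (fun _ => (exp_pos _).le) (h.sum_exp_neg_mul_le hl hb0 hb1)

end LinearCounting

lemma exp_neg_le_quadratic {t : ℝ} (ht : 0 ≤ t) : exp (-t) ≤ 1 - t + t ^ 2 / 2 := by
  -- `(1 + t + t²/2)(1 - t + t²/2) = 1 + t⁴/4 ≥ 1`
  have hpos : 0 < 1 + t + t ^ 2 / 2 := by positivity
  rw [exp_neg, inv_le_iff_one_le_mul₀ (exp_pos t)]
  nlinarith [quadratic_le_exp_of_nonneg ht, pow_nonneg ht 4]

lemma one_sub_one_sub_exp_neg_div_nonneg {t : ℝ} (ht : 0 ≤ t) :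
    0 ≤ 1 - (1 - exp (-t)) / t := by
  rw [sub_nonneg]
  exact div_le_one_of_le₀ (by linarith [add_one_le_exp (-t)]) ht

lemma one_sub_one_sub_exp_neg_div_le {t : ℝ} (ht : 0 < t) :
    1 - (1 - exp (-t)) / t ≤ t / 2 := by
  have : 1 - t / 2 ≤ (1 - exp (-t)) / t := by
    rw [le_div_iff₀ ht]
    nlinarith [exp_neg_le_quadratic ht.le]
  linarith

lemma mul_one_sub_one_sub_exp_neg_div_le {β d : ℝ} (hβ : 0 < β) (hd : 0 ≤ d) :
    d * (1 - (1 - exp (-β * d)) / (β * d)) ≤ β * d ^ 2 / 2 := by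
  rcases hd.eq_or_lt with rfl | hd
  · simp
  · calc d * (1 - (1 - exp (-β * d)) / (β * d)) ≤ d * (β * d / 2) := by
          rw [neg_mul]
          gcongr
          exact one_sub_one_sub_exp_neg_div_le (by positivity)
      _ = β * d ^ 2 / 2 := by ring

lemma mul_sqrt_mul_exp_neg_le {β x : ℝ} (hβ : 0 ≤ β) :
    β * √x * exp (-β * x) ≤ √β * exp (-(β / 2) * x) := by
  have hsqrt : √(β * x) ≤ exp (β / 2 * x) := by
    rw [sqrt_le_left (exp_pos _).le, ← exp_nat_mul]
    calc β * x ≤ β * x + 1 := by linarith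
      _ ≤ exp (β * x) := add_one_le_exp _
      _ = exp ((2 : ℕ) * (β / 2 * x)) := by push_cast; ring_nf
  calc β * √x * exp (-β * x) = √β * (√(β * x) * exp (-β * x)) := by
        rw [sqrt_mul hβ]
        linear_combination (-√x * exp (-β * x)) * mul_self_sqrt hβ
    _ ≤ √β * (exp (β / 2 * x) * exp (-β * x)) := by gcongr
    _ = √β * exp (-(β / 2) * x) := by rw [← exp_add]; ring_nf

noncomputable def gapTerm (β d x : ℝ) : ℝ :=
  d * exp (-β * x) * (1 - (1 - exp (-β * d)) / (β * d))

lemma gapTerm_nonneg {β d x : ℝ} (hβ : 0 ≤ β) (hd : 0 ≤ d) : 0 ≤ gapTerm β d x := by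
  have := one_sub_one_sub_exp_neg_div_nonneg (mul_nonneg hβ hd)
  rw [← neg_mul] at this
  unfold gapTerm
  positivity

lemma gapTerm_le {β d x A B : ℝ} (hβ : 0 < β) (hd : 0 ≤ d) (hA : 0 ≤ A)
    (hgap : d ^ 2 ≤ A * √x + B) :
    gapTerm β d x ≤ A / 2 * (√β * exp (-(β / 2) * x)) + B / 2 * (β * exp (-β * x)) :=
  calc gapTerm β d x = exp (-β * x) * (d * (1 - (1 - exp (-β * d)) / (β * d))) := by
        unfold gapTerm; ring
    _ ≤ exp (-β * x) * (β * (A * √x + B) / 2) := by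
        gcongr
        exact (mul_one_sub_one_sub_exp_neg_div_le hβ hd).trans (by gcongr)
    _ = A / 2 * (β * √x * exp (-β * x)) + B / 2 * (β * exp (-β * x)) := by ring
    _ ≤ A / 2 * (√β * exp (-(β / 2) * x)) + B / 2 * (β * exp (-β * x)) := by
        gcongr A / 2 * ?_ + _
        exact mul_sqrt_mul_exp_neg_le hβ.le

lemma tsum_gapTerm_le {ι : Type*} {l d : ι → ℝ} {A B C' β : ℝ} (hl : ∀ j, 0 ≤ l j)
    (hd : ∀ j, 0 ≤ d j) (hA : 0 ≤ A) (hB : 0 ≤ B) (hgap : ∀ j, d j ^ 2 ≤ A * √(l j) + B)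
    (hcount : LinearCounting l C') (hβ0 : 0 < β) (hβ1 : β ≤ 1) :
    ∑' j, gapTerm β (d j) (l j) ≤ C' * (∑' k : ℕ, ((k : ℝ) + 1) * exp (-k)) * (A + B) / √β := by
  set S := ∑' k : ℕ, ((k : ℝ) + 1) * exp (-k)
  have hS : 0 ≤ C' * S := mul_nonneg hcount.nonneg (tsum_nonneg fun k => by positivity)
  have hsqrt0 : 0 < √β := sqrt_pos.2 hβ0
  have hsqrt1 : √β ≤ 1 := sqrt_le_one.2 hβ1
  have hsum₁ := hcount.summable_exp_neg_mul hl (half_pos hβ0) (by linarith)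
  have hsum₂ := hcount.summable_exp_neg_mul hl hβ0 hβ1
  have hmaj := ((hsum₁.mul_left (√β)).mul_left (A / 2)).add ((hsum₂.mul_left β).mul_left (B / 2))
  have hbound := fun j => gapTerm_le (x := l j) hβ0 (hd j) hA (hgap j)
  calc ∑' j, gapTerm β (d j) (l j)
      ≤ ∑' j, (A / 2 * (√β * exp (-(β / 2) * l j)) + B / 2 * (β * exp (-β * l j))) :=
        (hmaj.of_nonneg_of_le (fun j => gapTerm_nonneg hβ0.le (hd j)) hbound).tsum_le_tsum
          hbound hmaj
    _ = A / 2 * √β * ∑' j, exp (-(β / 2) * l j) + B / 2 * β * ∑' j, exp (-β * l j) := by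
        rw [((hsum₁.mul_left _).mul_left _).tsum_add ((hsum₂.mul_left _).mul_left _)]
        simp only [tsum_mul_left, mul_assoc]
    _ ≤ A / 2 * √β * (C' * S / (β / 2)) + B / 2 * β * (C' * S / β) := by
        gcongr
        · exact hcount.tsum_exp_neg_mul_le hl (half_pos hβ0) (by linarith)
        · exact hcount.tsum_exp_neg_mul_le hl hβ0 hβ1
    _ = C' * S * (A / √β + B / 2) := by
        field_simp
        linear_combination (2 * A * C' * S) * mul_self_sqrt hβ0.le
    _ ≤ C' * S * ((A + B) / √β) := by
        rw [add_div]
        gcongr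
        linarith
    _ = C' * S * (A + B) / √β := by ring

theorem isBigO_tsum_gapTerm {ι : Type*} {l d : ι → ℝ} {A B C' : ℝ} (hl : ∀ j, 0 ≤ l j)
    (hd : ∀ j, 0 ≤ d j) (hA : 0 ≤ A) (hB : 0 ≤ B) (hgap : ∀ j, d j ^ 2 ≤ A * √(l j) + B)
    (hcount : LinearCounting l C') :
    (fun β : ℝ => ∑' j, gapTerm β (d j) (l j)) =O[𝓝[>] 0] fun β => β ^ (-(1 : ℝ) / 2) := by
  refine isBigO_iff.2 ⟨C' * (∑' k : ℕ, ((k : ℝ) + 1) * exp (-k)) * (A + B), ?_⟩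
  filter_upwards [Ioc_mem_nhdsGT one_pos] with β ⟨hβ0, hβ1⟩
  rw [norm_of_nonneg (tsum_nonneg fun j => gapTerm_nonneg hβ0.le (hd j)),
    norm_of_nonneg (rpow_nonneg hβ0.le _), show -(1 : ℝ) / 2 = -(1 / 2) by ring,
    rpow_neg hβ0.le, ← sqrt_eq_rpow, ← div_eq_mul_inv]
  exact tsum_gapTerm_le hl hd hA hB hgap hcount hβ0 hβ1

theorem stmt_4_general (l d : ℕ → ℝ) (hl : ∀ j, 0 ≤ l j) (hd : ∀ j, 0 ≤ d j)
    (C C' : ℝ)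
    (hgap : ∀ j : ℕ, 1 ≤ j → d j ≤ C * l j ^ ((1 : ℝ) / 4))
    (hcount : ∀ x : ℝ, 1 ≤ x → ∀ s : Finset ℕ, (∀ j ∈ s, l j ≤ x) → (s.card : ℝ) ≤ C' * x) :
    (fun β : ℝ => ∑' j : ℕ, d j * Real.exp (-β * l j) *
        (1 - (1 - Real.exp (-β * d j)) / (β * d j)))
      =O[𝓝[>] 0] fun β : ℝ => β ^ (-(1 : ℝ) / 2) := by
  -- `hgap` says nothing about `j = 0`; `d 0 ^ 2` absorbs that term.
  have hsq : ∀ j, d j ^ 2 ≤ C ^ 2 * √(l j) + d 0 ^ 2 := by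
    rintro (_ | j)
    · exact le_add_of_nonneg_left (by positivity)
    · calc d (j + 1) ^ 2 ≤ (C * l (j + 1) ^ ((1 : ℝ) / 4)) ^ 2 :=
            pow_le_pow_left₀ (hd _) (hgap _ (by omega)) 2
        _ = C ^ 2 * √(l (j + 1)) := by
            rw [mul_pow, sqrt_eq_rpow, ← rpow_mul_natCast (hl _)]
            norm_num
        _ ≤ C ^ 2 * √(l (j + 1)) + d 0 ^ 2 := le_add_of_nonneg_right (sq_nonneg _)
  exact isBigO_tsum_gapTerm hl hd (sq_nonneg C) (sq_nonneg (d 0)) hsq hcount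

theorem stmt_4 (l d : ℕ → ℝ) (hl : ∀ j, 0 ≤ l j) (hd : ∀ j, 0 ≤ d j)
    (hlim : Tendsto l atTop atTop)
    (C C' : ℝ) (hC : 0 < C) (hC' : 0 < C')
    (hgap : ∀ j : ℕ, 1 ≤ j → d j ≤ C * l j ^ ((1 : ℝ) / 4))
    (hcount : ∀ x : ℝ, 1 ≤ x → ∀ s : Finset ℕ, (∀ j ∈ s, l j ≤ x) → (s.card : ℝ) ≤ C' * x) :
    (fun β : ℝ => ∑' j : ℕ, d j * Real.exp (-β * l j) *
        (1 - (1 - Real.exp (-β * d j)) / (β * d j)))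
      =O[𝓝[>] 0] fun β : ℝ => β ^ (-(1 : ℝ) / 2) :=
  stmt_4_general l d hl hd C C' hgap hcount
end

section
/- For every γ ∈ (0, 1), the integral ∫_{-∞}^{∞} (1 - e^{-γ e^{2t}})/(t^2 + π^2/4) dt is O(1/log(1/γ)) as γ → 0+. -/
/-
The numerator `1 - exp (-γ e^{2t})` is at most `γ e^{2t}` and at most `1`. Split the line at
`T = log (1/γ) / 4`: on `(-∞, T]` the first bound integrates to `(2/π²) γ e^{2T} = (2/π²) √γ`, and on
`(T, ∞)` the second, with `t² + π²/4 ≥ t²`, gives `∫_T^∞ t⁻² dt = 4 / log (1/γ)`. Finally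
`√γ = O(1 / log (1/γ))` because `√γ log γ → 0`.
-/

open Filter MeasureTheory Topology Asymptotics Set Real

theorem norm_integral_le_of_norm_le_piecewise {α E : Type*} [MeasurableSpace α] {μ : Measure α}
    [NormedAddCommGroup E] [NormedSpace ℝ E] {f : α → E} {g h : α → ℝ} {s : Set α}
    (hs : MeasurableSet s) (hg : IntegrableOn g s μ) (hh : IntegrableOn h sᶜ μ)
    (hfg : ∀ x ∈ s, ‖f x‖ ≤ g x) (hfh : ∀ x ∉ s, ‖f x‖ ≤ h x) :
    ‖∫ x, f x ∂μ‖ ≤ (∫ x in s, g x ∂μ) + ∫ x in sᶜ, h x ∂μ := by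
  classical
  rw [← integral_piecewise hs hg hh]
  refine norm_integral_le_of_norm_le ?_ (Eventually.of_forall fun x => ?_)
  · rw [← Set.indicator_add_compl_eq_piecewise]
    exact (hg.integrable_indicator hs).add (hh.integrable_indicator hs.compl)
  · by_cases hx : x ∈ s
    · simpa [hx] using hfg x hx
    · simpa [hx] using hfh x hx

noncomputable def smoothIntegrand (γ t : ℝ) : ℝ :=
  (1 - exp (-(γ * exp (2 * t)))) / (t ^ 2 + π ^ 2 / 4)

section smoothIntegrand

variable {γ : ℝ}

theorem smoothIntegrand_nonneg (hγ : 0 ≤ γ) (t : ℝ) : 0 ≤ smoothIntegrand γ t := by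
  have : exp (-(γ * exp (2 * t))) ≤ 1 := exp_le_one_iff.2 (neg_nonpos.2 (by positivity))
  unfold smoothIntegrand
  exact div_nonneg (by linarith) (by positivity)

theorem smoothIntegrand_le_exp (hγ : 0 ≤ γ) (t : ℝ) :
    smoothIntegrand γ t ≤ 4 * γ / π ^ 2 * exp (2 * t) := by
  have hnum : 1 - exp (-(γ * exp (2 * t))) ≤ γ * exp (2 * t) := by
    linarith [one_sub_le_exp_neg (γ * exp (2 * t))]
  calc smoothIntegrand γ t ≤ γ * exp (2 * t) / (π ^ 2 / 4) :=
        div_le_div₀ (by positivity) hnum (by positivity) (by nlinarith [sq_nonneg t])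
    _ = 4 * γ / π ^ 2 * exp (2 * t) := by ring

theorem smoothIntegrand_le_rpow {t : ℝ} (ht : 0 < t) : smoothIntegrand γ t ≤ t ^ (-2 : ℝ) := by
  rw [rpow_neg ht.le, rpow_two, ← one_div]
  exact div_le_div₀ zero_le_one (by linarith [exp_pos (-(γ * exp (2 * t)))]) (by positivity)
    (le_add_of_nonneg_right (by positivity))

theorem norm_integral_smoothIntegrand_le (hγ : 0 ≤ γ) {T : ℝ} (hT : 0 < T) :
    ‖∫ t, smoothIntegrand γ t‖ ≤ 2 / π ^ 2 * (γ * exp (2 * T)) + T⁻¹ := by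
  have hle := norm_integral_le_of_norm_le_piecewise (μ := volume) (f := smoothIntegrand γ)
    (g := fun t => 4 * γ / π ^ 2 * exp (2 * t)) (h := fun t => t ^ (-2 : ℝ))
    measurableSet_Iic ((integrableOn_exp_mul_Iic two_pos T).const_mul (4 * γ / π ^ 2))
    (by simpa only [compl_Iic] using integrableOn_Ioi_rpow_of_lt (by norm_num) hT)
    (fun t _ => by
      rw [norm_of_nonneg (smoothIntegrand_nonneg hγ t)]; exact smoothIntegrand_le_exp hγ t)
    (fun t ht => by
      rw [norm_of_nonneg (smoothIntegrand_nonneg hγ t)]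
      exact smoothIntegrand_le_rpow (hT.trans (not_le.1 ht)))
  rw [compl_Iic, integral_const_mul, integral_exp_mul_Iic two_pos,
    integral_Ioi_rpow_of_lt (by norm_num) hT] at hle
  refine hle.trans_eq ?_
  norm_num [rpow_neg_one]
  ring

theorem norm_integral_smoothIntegrand_le_sqrt (hγ0 : 0 < γ) (hγ1 : γ < 1) :
    ‖∫ t, smoothIntegrand γ t‖ ≤ 2 / π ^ 2 * √γ + 4 * (1 / log (1 / γ)) := by
  have hL : 0 < log (1 / γ) := log_pos ((one_lt_div hγ0).2 hγ1)
  have hsqrt : γ * exp (2 * (log (1 / γ) / 4)) = √γ := by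
    rw [sqrt_eq_rpow, rpow_def_of_pos hγ0, one_div, log_inv]
    nth_rewrite 1 [← exp_log hγ0]
    rw [← exp_add]
    ring_nf
  have := norm_integral_smoothIntegrand_le hγ0.le (T := log (1 / γ) / 4) (by positivity)
  rw [hsqrt, inv_div] at this
  exact this.trans_eq (by ring)

end smoothIntegrand

theorem sqrt_isBigO_one_div_log_one_div :
    (fun γ : ℝ => √γ) =O[𝓝[>] 0] fun γ => 1 / log (1 / γ) := by
  refine isBigO_of_div_tendsto_nhds ?_ 0 ?_
  · filter_upwards [Ioo_mem_nhdsGT one_pos] with γ ⟨hγ0, hγ1⟩ hzero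
    exact absurd hzero (one_div_pos.2 (log_pos ((one_lt_div hγ0).2 hγ1))).ne'
  · have hlim := (tendsto_log_mul_rpow_nhdsGT_zero one_half_pos).neg
    rw [neg_zero] at hlim
    refine hlim.congr fun γ => ?_
    simp only [Pi.div_apply, sqrt_eq_rpow, one_div, log_inv, div_neg, div_inv_eq_mul]
    ring

theorem stmt_7 :
    (fun γ : ℝ => ∫ t : ℝ, (1 - Real.exp (-(γ * Real.exp (2 * t)))) / (t ^ 2 + Real.pi ^ 2 / 4))
      =O[𝓝[>] 0] fun γ : ℝ => 1 / Real.log (1 / γ) := by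
  have hbound : (fun γ : ℝ => 2 / π ^ 2 * √γ + 4 * (1 / log (1 / γ)))
      =O[𝓝[>] 0] fun γ => 1 / log (1 / γ) :=
    (sqrt_isBigO_one_div_log_one_div.const_mul_left _).add ((isBigO_refl _ _).const_mul_left _)
  refine IsBigO.trans (IsBigO.of_bound' ?_) hbound
  filter_upwards [Ioo_mem_nhdsGT one_pos] with γ ⟨hγ0, hγ1⟩
  exact (norm_integral_smoothIntegrand_le_sqrt hγ0 hγ1).trans (le_abs_self _)
end

section
/- Let σ_0 > 0 and define h(ρ) = -1/(ρ^2 + σ_0^2)^2 for complex ρ. Then there exist constants c > 0 and T_0 > 0 such that for all real T ≥ T_0 and all t ∈ [-σ_0, 0], the real part of h'(T + it) satisfies Re h'(T + it) ≥ c/T^5. -/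
/-!
Since `h'(ρ) = 4ρ / (ρ² + σ₀²)³`, writing `(T + it)² + σ₀² = A + iB` with `A = T² - t² + σ₀²`
and `B = 2Tt` gives `Re h'(T + it) = 4 (T Re((A + iB)³) + t Im((A + iB)³)) / (A² + B²)³`.
For `T ≥ 4σ₀` and `t ∈ [-σ₀, 0]` we have `T² ≤ A ≤ 2T²`, `4B² ≤ A²` and `tB ≥ 0`, so the numerator
is at least `T A³ ≥ T⁷` while the denominator is at most `(5T⁴)³`.
-/

open Complex

theorem hasDerivAt_neg_one_div_sq_add_sq {𝕜 : Type*} [NontriviallyNormedField 𝕜] (a z : 𝕜)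
    (hz : z ^ 2 + a ^ 2 ≠ 0) :
    HasDerivAt (fun ρ : 𝕜 => -1 / (ρ ^ 2 + a ^ 2) ^ 2) (4 * z / (z ^ 2 + a ^ 2) ^ 3) z := by
  refine ((hasDerivAt_const z (-1 : 𝕜)).div (((hasDerivAt_pow 2 z).add_const (a ^ 2)).pow 2)
    (pow_ne_zero 2 hz)).congr_deriv ?_
  simp only [Pi.pow_apply]
  field_simp
  ring

theorem ofReal_add_mul_I_sq_add_sq (T t σ : ℝ) :
    ((T : ℂ) + t * I) ^ 2 + (σ : ℂ) ^ 2 =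
      ((T ^ 2 - t ^ 2 + σ ^ 2 : ℝ) : ℂ) + ((2 * T * t : ℝ) : ℂ) * I := by
  apply Complex.ext <;> simp [sq]; ring

theorem re_div_add_mul_I_pow_three (x y A B : ℝ) :
    (((x : ℂ) + y * I) / ((A : ℂ) + B * I) ^ 3).re =
      (x * (A ^ 3 - 3 * A * B ^ 2) + y * (3 * A ^ 2 * B - B ^ 3)) / (A ^ 2 + B ^ 2) ^ 3 := by
  have hre : (((A : ℂ) + B * I) ^ 3).re = A ^ 3 - 3 * A * B ^ 2 := by
    simp [pow_succ, mul_re, mul_im]; ring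
  have him : (((A : ℂ) + B * I) ^ 3).im = 3 * A ^ 2 * B - B ^ 3 := by
    simp [pow_succ, mul_re, mul_im]; ring
  rw [div_re, hre, him, map_pow, normSq_add_mul_I]
  simp only [add_re, add_im, ofReal_re, ofReal_im, mul_re, mul_im, I_re, I_im]
  ring

theorem div_pow_five_le_of_sq_le_of_le_two_mul_sq {T t A B : ℝ} (hT : 0 < T) (hTA : T ^ 2 ≤ A)
    (hAT : A ≤ 2 * T ^ 2) (hB : 4 * B ^ 2 ≤ A ^ 2) (htB : 0 ≤ t * B) :
    1 / 125 / T ^ 5 ≤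
      4 * ((T * (A ^ 3 - 3 * A * B ^ 2) + t * (3 * A ^ 2 * B - B ^ 3)) / (A ^ 2 + B ^ 2) ^ 3) := by
  have hA : 0 < A := (by positivity : 0 < T ^ 2).trans_le hTA
  have hnum : T ^ 7 ≤ 4 * (T * (A ^ 3 - 3 * A * B ^ 2) + t * (3 * A ^ 2 * B - B ^ 3)) := by
    have hA3 : T ^ 6 ≤ A ^ 3 := by simpa [← pow_mul] using pow_le_pow_left₀ (sq_nonneg T) hTA 3
    have h1 : T * A * (A ^ 2 / 4) ≤ T * A * (A ^ 2 - 3 * B ^ 2) := by gcongr; linarith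
    have h2 : 0 ≤ t * B * (3 * A ^ 2 - B ^ 2) := mul_nonneg htB (by nlinarith)
    nlinarith [mul_le_mul_of_nonneg_left hA3 hT.le]
  rw [mul_div_assoc']
  have hden : (A ^ 2 + B ^ 2) ^ 3 ≤ (5 * T ^ 4) ^ 3 := by
    have : A ^ 2 ≤ 4 * T ^ 4 := by nlinarith
    gcongr
    nlinarith
  rw [div_le_div_iff₀ (by positivity) (by positivity)]
  calc 1 / 125 * (A ^ 2 + B ^ 2) ^ 3 ≤ 1 / 125 * (5 * T ^ 4) ^ 3 := by gcongr
    _ = T ^ 7 * T ^ 5 := by ring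
    _ ≤ _ := by gcongr

theorem stmt_15 (σ₀ : ℝ) (hσ₀ : 0 < σ₀) :
    ∃ c : ℝ, 0 < c ∧ ∃ T₀ : ℝ, 0 < T₀ ∧ ∀ T : ℝ, T₀ ≤ T → ∀ t : ℝ, -σ₀ ≤ t → t ≤ 0 →
      c / T ^ 5 ≤ (deriv (fun ρ : ℂ => -1 / ((ρ ^ 2 + (σ₀ : ℂ) ^ 2) ^ 2))
        ((T : ℂ) + (t : ℂ) * Complex.I)).re := by
  refine ⟨1 / 125, by norm_num, 4 * σ₀, by positivity, fun T hT t ht₁ ht₂ => ?_⟩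
  have hTpos : 0 < T := by linarith
  have ht : t ^ 2 ≤ σ₀ ^ 2 := by nlinarith
  have hA : T ^ 2 ≤ T ^ 2 - t ^ 2 + σ₀ ^ 2 := by linarith
  have hB : 4 * (2 * T * t) ^ 2 ≤ (T ^ 2 - t ^ 2 + σ₀ ^ 2) ^ 2 :=
    calc 4 * (2 * T * t) ^ 2 = T ^ 2 * (16 * t ^ 2) := by ring
      _ ≤ T ^ 2 * (4 * σ₀) ^ 2 := by gcongr; linarith
      _ ≤ T ^ 2 * T ^ 2 := by gcongr
      _ = (T ^ 2) ^ 2 := by ring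
      _ ≤ _ := by gcongr
  have hw := ofReal_add_mul_I_sq_add_sq T t σ₀
  have hne : ((T : ℂ) + t * I) ^ 2 + (σ₀ : ℂ) ^ 2 ≠ 0 := by
    rw [hw]
    intro h
    have hre := congrArg re h
    simp only [add_re, ofReal_re, re_ofReal_mul, I_re, mul_zero, add_zero, zero_re] at hre
    nlinarith
  rw [(hasDerivAt_neg_one_div_sq_add_sq _ _ hne).deriv, hw, mul_div_assoc]
  simp only [mul_re, re_ofNat, im_ofNat, zero_mul, sub_zero]
  rw [re_div_add_mul_I_pow_three]
  exact div_pow_five_le_of_sq_le_of_le_two_mul_sq hTpos hA (by nlinarith) hB (by nlinarith)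
end

section
/- For β > 0 and σ > 0, ∫_{-∞}^∞ 2β(σ + |s|) e^{βσ^2 - βs^2} · (1/(1 + (1/2)log(σ^2 + s^2))) ds = O(1/log(1/β)) as β → 0+, for fixed σ > e. -/
/-! The weight `1 / (1 + ½ log (σ² + s²))` is at most `1` everywhere and at most `1 / log R` for
`|s| > R`. The Gaussian factor `2β(σ + |s|)e^{βσ² - βs²}` has integral `(2σ√(πβ) + 2)e^{βσ²}`, and
on `[-R, R]` it is at most `2β(σ + R)e^{βσ²}`. Hence the integral is
`O(1 / log R + βR²)`, and `R = β^{-1/4}` makes both terms `O(1 / log (1 / β))`, since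
`√β log (1 / β) ≤ 2`. -/

open Filter MeasureTheory Topology Asymptotics

open Real Set

lemma integral_mul_le_of_le_add_indicator {α : Type*} [MeasurableSpace α] {μ : Measure α}
    {g w : α → ℝ} {S : Set α} {ε : ℝ} (hS : MeasurableSet S) (hg : Integrable g μ)
    (hg0 : 0 ≤ g) (hw0 : 0 ≤ w) (hw : ∀ x, w x ≤ ε + S.indicator 1 x) :
    ∫ x, g x * w x ∂μ ≤ ε * ∫ x, g x ∂μ + ∫ x in S, g x ∂μ := by
  have hbound : ∀ x, g x * w x ≤ ε * g x + S.indicator g x := fun x => by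
    calc g x * w x ≤ g x * (ε + S.indicator 1 x) := mul_le_mul_of_nonneg_left (hw x) (hg0 x)
      _ = ε * g x + S.indicator g x := by by_cases hx : x ∈ S <;> simp [hx] <;> ring
  calc ∫ x, g x * w x ∂μ ≤ ∫ x, (ε * g x + S.indicator g x) ∂μ :=
        integral_mono_of_nonneg (.of_forall fun x => mul_nonneg (hg0 x) (hw0 x))
          ((hg.const_mul ε).add (hg.indicator hS)) (.of_forall hbound)
    _ = ε * ∫ x, g x ∂μ + ∫ x in S, g x ∂μ := by
        rw [integral_add (hg.const_mul ε) (hg.indicator hS), integral_const_mul,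
          integral_indicator hS]

section GaussianMoments

variable {b : ℝ}

lemma integral_Ioi_mul_exp_neg_mul_sq (hb : 0 < b) :
    ∫ x in Ioi (0 : ℝ), x * exp (-b * x ^ 2) = (2 * b)⁻¹ := by
  apply Complex.ofReal_injective
  rw [← integral_complex_ofReal]
  push_cast
  exact integral_mul_cexp_neg_mul_sq (by simpa using hb)

lemma integrable_abs_mul_exp_neg_mul_sq (hb : 0 < b) :
    Integrable fun x : ℝ => |x| * exp (-b * x ^ 2) := by
  simpa [abs_mul] using (integrable_mul_exp_neg_mul_sq hb).abs

lemma integral_abs_mul_exp_neg_mul_sq (hb : 0 < b) :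
    ∫ x, |x| * exp (-b * x ^ 2) = b⁻¹ := by
  have h := integral_comp_abs (f := fun x => x * exp (-b * x ^ 2))
  simp only [sq_abs] at h
  rw [h, integral_Ioi_mul_exp_neg_mul_sq hb]
  field_simp

lemma integrable_add_abs_mul_exp_neg_mul_sq (hb : 0 < b) (c : ℝ) :
    Integrable fun x : ℝ => (c + |x|) * exp (-b * x ^ 2) := by
  simp only [add_mul]
  exact ((integrable_exp_neg_mul_sq hb).const_mul c).add (integrable_abs_mul_exp_neg_mul_sq hb)

lemma integral_add_abs_mul_exp_neg_mul_sq (hb : 0 < b) (c : ℝ) :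
    ∫ x, (c + |x|) * exp (-b * x ^ 2) = c * √(π / b) + b⁻¹ := by
  simp only [add_mul]
  rw [integral_add ((integrable_exp_neg_mul_sq hb).const_mul c)
    (integrable_abs_mul_exp_neg_mul_sq hb), integral_const_mul, integral_gaussian,
    integral_abs_mul_exp_neg_mul_sq hb]

end GaussianMoments

noncomputable def gaussianFactor (β σ s : ℝ) : ℝ := 2 * β * (σ + |s|) * exp (β * σ ^ 2 - β * s ^ 2)

noncomputable def logWeight (σ s : ℝ) : ℝ := 1 / (1 + 1 / 2 * log (σ ^ 2 + s ^ 2))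

section GaussianFactor

variable {β σ : ℝ}

lemma gaussianFactor_eq (β σ s : ℝ) :
    gaussianFactor β σ s = 2 * β * exp (β * σ ^ 2) * ((σ + |s|) * exp (-β * s ^ 2)) := by
  rw [gaussianFactor, sub_eq_add_neg, exp_add]
  ring_nf

lemma gaussianFactor_nonneg (hβ : 0 ≤ β) (hσ : 0 ≤ σ) (s : ℝ) : 0 ≤ gaussianFactor β σ s := by
  unfold gaussianFactor
  have := abs_nonneg s
  positivity

lemma integrable_gaussianFactor (hβ : 0 < β) (σ : ℝ) : Integrable (gaussianFactor β σ) := by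
  simp_rw [funext (gaussianFactor_eq β σ)]
  exact (integrable_add_abs_mul_exp_neg_mul_sq hβ σ).const_mul _

lemma integral_gaussianFactor (hβ : 0 < β) (σ : ℝ) :
    ∫ s, gaussianFactor β σ s = (2 * σ * √(π * β) + 2) * exp (β * σ ^ 2) := by
  simp_rw [gaussianFactor_eq]
  rw [integral_const_mul, integral_add_abs_mul_exp_neg_mul_sq hβ]
  have : β * √(π / β) = √(π * β) := by
    rw [sqrt_div' _ hβ.le, sqrt_mul' _ hβ.le]
    field_simp
    rw [sq_sqrt hβ.le]
  rw [← this]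
  field_simp

lemma setIntegral_Icc_gaussianFactor_le {R : ℝ} (hβ : 0 ≤ β) (hσ : 0 ≤ σ) (hR : 0 ≤ R) :
    ∫ s in Icc (-R) R, gaussianFactor β σ s ≤ 4 * β * R * (σ + R) * exp (β * σ ^ 2) := by
  have hC : ∀ s ∈ Icc (-R) R, ‖gaussianFactor β σ s‖ ≤ 2 * β * (σ + R) * exp (β * σ ^ 2) := by
    intro s hs
    rw [norm_of_nonneg (gaussianFactor_nonneg hβ hσ s), gaussianFactor]
    gcongr
    · exact abs_le.2 hs
    · nlinarith [sq_nonneg s]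
  calc _ ≤ ‖∫ s in Icc (-R) R, gaussianFactor β σ s‖ := le_norm_self _
    _ ≤ 2 * β * (σ + R) * exp (β * σ ^ 2) * volume.real (Icc (-R) R) :=
        norm_setIntegral_le_of_norm_le_const measure_Icc_lt_top hC
    _ = 4 * β * R * (σ + R) * exp (β * σ ^ 2) := by
        rw [Real.volume_real_Icc, max_eq_left (by linarith)]
        ring

end GaussianFactor

section LogWeight

variable {σ : ℝ}

lemma one_le_one_add_half_log_sq_add_sq (hσ : 1 ≤ σ) (s : ℝ) :
    1 ≤ 1 + 1 / 2 * log (σ ^ 2 + s ^ 2) := by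
  have : 0 ≤ log (σ ^ 2 + s ^ 2) := log_nonneg (by nlinarith [sq_nonneg s])
  linarith

lemma logWeight_nonneg (hσ : 1 ≤ σ) (s : ℝ) : 0 ≤ logWeight σ s := by
  have := one_le_one_add_half_log_sq_add_sq hσ s
  unfold logWeight
  positivity

lemma logWeight_le_inv_log_add_indicator {R : ℝ} (hσ : 1 ≤ σ) (hR : 1 < R) (s : ℝ) :
    logWeight σ s ≤ (log R)⁻¹ + (Icc (-R) R).indicator 1 s := by
  have hD := one_le_one_add_half_log_sq_add_sq hσ s
  by_cases hs : s ∈ Icc (-R) R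
  · rw [indicator_of_mem hs, Pi.one_apply]
    have := inv_pos.2 (log_pos hR)
    have : logWeight σ s ≤ 1 := (div_le_one (by linarith)).2 hD
    linarith
  · rw [indicator_of_notMem hs, add_zero, logWeight, one_div]
    have hRs : R < |s| := by
      by_contra! h
      exact hs (abs_le.1 h)
    have hlog : log R ≤ 1 + 1 / 2 * log (σ ^ 2 + s ^ 2) := by
      have h1 : log R < log |s| := log_lt_log (by linarith) hRs
      have h2 : log (|s| ^ 2) ≤ log (σ ^ 2 + s ^ 2) :=
        log_le_log (pow_pos (by linarith) 2) (by rw [sq_abs]; nlinarith)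
      rw [log_pow] at h2
      push_cast at h2
      linarith
    exact inv_anti₀ (log_pos hR) hlog

end LogWeight

lemma sqrt_le_two_div_log_one_div {β : ℝ} (hβ : 0 < β) (hβ1 : β < 1) :
    √β ≤ 2 / log (1 / β) := by
  have hL : 0 < log (1 / β) := log_pos (by rw [lt_div_iff₀ hβ]; linarith)
  have h := log_le_rpow_div (x := 1 / β) (by positivity) one_half_pos
  rw [← sqrt_eq_rpow, sqrt_div' _ hβ.le, sqrt_one] at h
  rw [le_div_iff₀ hL]
  have := sqrt_pos.2 hβ
  calc √β * log (1 / β) ≤ √β * (1 / √β / (1 / 2)) := by gcongr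
    _ = 2 := by field_simp

section Integral

variable {β σ : ℝ}

lemma integral_gaussianFactor_mul_logWeight_le {R : ℝ} (hβ : 0 < β) (hσ : 1 ≤ σ) (hR : 1 < R) :
    ∫ s, gaussianFactor β σ s * logWeight σ s
      ≤ ((2 * σ * √(π * β) + 2) / log R + 4 * β * R * (σ + R)) * exp (β * σ ^ 2) := by
  calc _ ≤ (log R)⁻¹ * (∫ s, gaussianFactor β σ s) + ∫ s in Icc (-R) R, gaussianFactor β σ s :=
        integral_mul_le_of_le_add_indicator measurableSet_Icc (integrable_gaussianFactor hβ σ)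
          (gaussianFactor_nonneg hβ.le (by linarith)) (logWeight_nonneg hσ)
          (logWeight_le_inv_log_add_indicator hσ hR)
    _ ≤ _ := by
        rw [integral_gaussianFactor hβ, add_mul ((2 * σ * √(π * β) + 2) / log R),
          div_mul_eq_mul_div, div_eq_inv_mul]
        gcongr
        exact setIntegral_Icc_gaussianFactor_le hβ.le (by linarith) (by linarith)

lemma integral_gaussianFactor_mul_logWeight_le_div_log (hβ : 0 < β) (hβ1 : β < 1)
    (hσ : 1 ≤ σ) :
    ∫ s, gaussianFactor β σ s * logWeight σ s
      ≤ 8 * (σ * √π + σ + 2) * exp (σ ^ 2) / log (1 / β) := by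
  set L := log (1 / β) with hLdef
  have hL : 0 < L := log_pos (by rw [lt_div_iff₀ hβ]; linarith)
  set R := β ^ (-(1 / 4 : ℝ))
  have hR : 1 < R := one_lt_rpow_of_pos_of_lt_one_of_neg hβ hβ1 (by norm_num)
  have hlogR : log R = L / 4 := by
    rw [log_rpow hβ, hLdef, log_div one_ne_zero hβ.ne', log_one]
    ring
  have hβR2 : β * R ^ 2 = √β := by
    rw [sqrt_eq_rpow, ← rpow_natCast, ← rpow_mul hβ.le, ← rpow_one_add' hβ.le] <;> norm_num
  have hfirst : (2 * σ * √(π * β) + 2) / log R ≤ 4 * (2 * σ * √π + 2) / L := by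
    have : √(π * β) ≤ √π := sqrt_le_sqrt (by nlinarith [pi_pos])
    rw [hlogR, div_div_eq_mul_div, mul_comm]
    gcongr
  have hsecond : 4 * β * R * (σ + R) ≤ 4 * (σ + 1) * (2 / L) := by
    calc 4 * β * R * (σ + R) ≤ 4 * (σ + 1) * (β * R ^ 2) := by
          have : 0 ≤ β * R * (R - 1) * σ :=
            mul_nonneg (mul_nonneg (by positivity) (sub_nonneg.2 hR.le)) (by linarith)
          nlinarith
      _ ≤ 4 * (σ + 1) * (2 / L) := by
          rw [hβR2]
          gcongr
          exact sqrt_le_two_div_log_one_div hβ hβ1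
  have hexp : exp (β * σ ^ 2) ≤ exp (σ ^ 2) := exp_le_exp.2 (by nlinarith)
  calc _ ≤ ((2 * σ * √(π * β) + 2) / log R + 4 * β * R * (σ + R)) * exp (β * σ ^ 2) :=
        integral_gaussianFactor_mul_logWeight_le hβ hσ hR
    _ ≤ (4 * (2 * σ * √π + 2) / L + 4 * (σ + 1) * (2 / L)) * exp (σ ^ 2) := by
        gcongr
    _ = _ := by ring

end Integral

theorem stmt_16 (σ : ℝ) (hσ : Real.exp 1 < σ) :
    (fun β : ℝ => ∫ s : ℝ, 2 * β * (σ + |s|) * Real.exp (β * σ ^ 2 - β * s ^ 2) *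
        (1 / (1 + (1 / 2) * Real.log (σ ^ 2 + s ^ 2))))
      =O[𝓝[>] 0] fun β : ℝ => 1 / Real.log (1 / β) := by
  have hσ1 : 1 ≤ σ := by linarith [add_one_le_exp (1 : ℝ)]
  refine IsBigO.of_bound (8 * (σ * √π + σ + 2) * exp (σ ^ 2)) ?_
  filter_upwards [Ioo_mem_nhdsGT one_pos] with β ⟨hβ, hβ1⟩
  have hL : 0 < log (1 / β) := log_pos (by rw [lt_div_iff₀ hβ]; linarith)
  have hnonneg : ∀ s, 0 ≤ gaussianFactor β σ s * logWeight σ s := fun s =>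
    mul_nonneg (gaussianFactor_nonneg hβ.le (by linarith) s) (logWeight_nonneg hσ1 s)
  change ‖∫ s, gaussianFactor β σ s * logWeight σ s‖ ≤ _
  rw [norm_of_nonneg (integral_nonneg hnonneg), norm_of_nonneg (by positivity),
    ← div_eq_mul_one_div]
  exact integral_gaussianFactor_mul_logWeight_le_div_log hβ hβ1 hσ1
end

section
/- Let γ ∈ (0,1), ξ > 1, and ε ∈ (0, 1/2). Then ∫_0^∞ (w e^{-w^2}) / log(ξ^2 + w^2/γ) dw ≤ C·(γ^{2ε}/log(ξ^2) + 1/((1-2ε)·log(1/γ))) for an absolute constant C, provided γ is small enough. -/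
/-!
Split the integral at `a = γ ^ ε`. On `(0, a]` the denominator is at least `log ξ²` and
`w e^{-w²} ≤ w`, giving at most `a² / (2 log ξ²) = γ^{2ε} / (2 log ξ²)`. On `(a, ∞)` we have
`ξ² + w²/γ ≥ a²/γ = γ^{2ε-1}`, so the denominator is at least `(1 - 2ε) log (1/γ)`, and
`∫₀^∞ w e^{-w²} dw = 1/2`. The estimate therefore holds with `C = 1` for every `γ < 1`.
-/

open MeasureTheory

open Real Set

lemma integral_Ioi_mul_exp_neg_sq : ∫ w in Ioi (0 : ℝ), w * exp (-w ^ 2) = 1 / 2 := by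
  have h := integral_mul_cexp_neg_mul_sq (b := 1) (by simp)
  apply Complex.ofReal_injective
  rw [← integral_complex_ofReal]
  push_cast
  simpa using h

lemma integrableOn_Ioi_mul_exp_neg_sq : IntegrableOn (fun w : ℝ ↦ w * exp (-w ^ 2)) (Ioi 0) := by
  simpa using (integrable_mul_exp_neg_mul_sq one_pos).integrableOn

lemma rpow_sq_eq_rpow_two_mul {x : ℝ} (hx : 0 ≤ x) (y : ℝ) : (x ^ y) ^ 2 = x ^ (2 * y) := by
  rw [← rpow_mul_natCast hx, mul_comm]
  norm_num

lemma integral_Ioc_zero_id {a : ℝ} (ha : 0 ≤ a) : ∫ w in Ioc 0 a, w = a ^ 2 / 2 := by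
  rw [← intervalIntegral.integral_of_le ha, integral_id]
  ring

section

variable {c γ : ℝ}

lemma mul_log_inv_le_log_add_sq_div (hγ : 0 < γ) (hc : 0 ≤ c) {ε w : ℝ} (hw : γ ^ ε ≤ w) :
    (1 - 2 * ε) * log (1 / γ) ≤ log (c + w ^ 2 / γ) := by
  have hpos : 0 < γ ^ ε := rpow_pos_of_pos hγ ε
  have hsq : (γ ^ ε) ^ 2 / γ = γ ^ (2 * ε - 1) := by
    rw [rpow_sq_eq_rpow_two_mul hγ.le, rpow_sub hγ, rpow_one]
  calc (1 - 2 * ε) * log (1 / γ) = log ((γ ^ ε) ^ 2 / γ) := by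
        rw [hsq, log_rpow hγ, one_div, log_inv]; ring
    _ ≤ log (c + w ^ 2 / γ) := by
        have : (γ ^ ε) ^ 2 / γ ≤ w ^ 2 / γ := by gcongr
        exact log_le_log (by positivity) (by linarith)

lemma mul_exp_neg_sq_div_log_le_div_log (hc : 1 < c) (hγ : 0 ≤ γ) {w : ℝ} (hw : 0 ≤ w) :
    w * exp (-w ^ 2) / log (c + w ^ 2 / γ) ≤ w / log c := by
  have hlog := log_pos hc
  calc w * exp (-w ^ 2) / log (c + w ^ 2 / γ) ≤ w * 1 / log c := by
        gcongr
        · exact exp_le_one_iff.2 (by nlinarith)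
        · exact le_add_of_nonneg_right (by positivity)
    _ = w / log c := by rw [mul_one]

lemma integrableOn_mul_exp_neg_sq_div_log (hc : 1 < c) (hγ : 0 ≤ γ) :
    IntegrableOn (fun w ↦ w * exp (-w ^ 2) / log (c + w ^ 2 / γ)) (Ioi 0) := by
  refine (integrableOn_Ioi_mul_exp_neg_sq.div_const (log c)).mono'
    (by fun_prop : Measurable _).aestronglyMeasurable ?_
  filter_upwards [ae_restrict_mem measurableSet_Ioi] with w (hw : 0 < w)
  have hlog : 0 < log c := log_pos hc
  have hle : log c ≤ log (c + w ^ 2 / γ) :=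
    log_le_log (by linarith) (le_add_of_nonneg_right (by positivity))
  rw [norm_of_nonneg (div_nonneg (by positivity) (hlog.trans_le hle).le)]
  gcongr

lemma setIntegral_Ioc_mul_exp_neg_sq_div_log_le (hc : 1 < c) (hγ : 0 ≤ γ) {a : ℝ} (ha : 0 ≤ a) :
    ∫ w in Ioc 0 a, w * exp (-w ^ 2) / log (c + w ^ 2 / γ) ≤ a ^ 2 / (2 * log c) :=
  calc ∫ w in Ioc 0 a, w * exp (-w ^ 2) / log (c + w ^ 2 / γ)
      ≤ ∫ w in Ioc 0 a, w / log c :=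
        setIntegral_mono_on ((integrableOn_mul_exp_neg_sq_div_log hc hγ).mono_set Ioc_subset_Ioi_self)
          (continuous_id.div_const _).integrableOn_Ioc measurableSet_Ioc
          fun w hw ↦ mul_exp_neg_sq_div_log_le_div_log hc hγ hw.1.le
    _ = a ^ 2 / (2 * log c) := by rw [integral_div, integral_Ioc_zero_id ha, div_div]

lemma setIntegral_Ioi_rpow_mul_exp_neg_sq_div_log_le (hc : 1 < c) (hγ : 0 < γ) {ε : ℝ}
    (hD : 0 < (1 - 2 * ε) * log (1 / γ)) :
    ∫ w in Ioi (γ ^ ε), w * exp (-w ^ 2) / log (c + w ^ 2 / γ)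
      ≤ 1 / (2 * ((1 - 2 * ε) * log (1 / γ))) := by
  have hsub : Ioi (γ ^ ε) ⊆ Ioi 0 := Ioi_subset_Ioi (rpow_pos_of_pos hγ ε).le
  calc ∫ w in Ioi (γ ^ ε), w * exp (-w ^ 2) / log (c + w ^ 2 / γ)
      ≤ ∫ w in Ioi (γ ^ ε), w * exp (-w ^ 2) / ((1 - 2 * ε) * log (1 / γ)) :=
        setIntegral_mono_on ((integrableOn_mul_exp_neg_sq_div_log hc hγ.le).mono_set hsub)
          ((integrableOn_Ioi_mul_exp_neg_sq.mono_set hsub).div_const _) measurableSet_Ioi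
          fun w hw ↦ by
            have : 0 < w := hsub hw
            gcongr
            exact mul_log_inv_le_log_add_sq_div hγ (by linarith) (le_of_lt hw)
    _ ≤ (∫ w in Ioi 0, w * exp (-w ^ 2)) / ((1 - 2 * ε) * log (1 / γ)) := by
        rw [integral_div]
        refine div_le_div_of_nonneg_right (setIntegral_mono_set integrableOn_Ioi_mul_exp_neg_sq
          ?_ hsub.eventuallyLE) hD.le
        exact (ae_restrict_iff' measurableSet_Ioi).2 (.of_forall fun w (hw : 0 < w) ↦ by positivity)
    _ = 1 / (2 * ((1 - 2 * ε) * log (1 / γ))) := by rw [integral_Ioi_mul_exp_neg_sq, div_div]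

lemma integral_mul_exp_neg_sq_div_log_le (hc : 1 < c) (hγ : 0 < γ) {ε : ℝ}
    (hD : 0 < (1 - 2 * ε) * log (1 / γ)) :
    ∫ w in Ioi 0, w * exp (-w ^ 2) / log (c + w ^ 2 / γ)
      ≤ γ ^ (2 * ε) / (2 * log c) + 1 / (2 * ((1 - 2 * ε) * log (1 / γ))) := by
  have ha : 0 ≤ γ ^ ε := (rpow_pos_of_pos hγ ε).le
  have hint := integrableOn_mul_exp_neg_sq_div_log hc hγ.le
  rw [← Ioc_union_Ioi_eq_Ioi ha, setIntegral_union (Ioc_disjoint_Ioi le_rfl) measurableSet_Ioi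
    (hint.mono_set Ioc_subset_Ioi_self) (hint.mono_set (Ioi_subset_Ioi ha)),
    ← rpow_sq_eq_rpow_two_mul hγ.le]
  exact add_le_add (setIntegral_Ioc_mul_exp_neg_sq_div_log_le hc hγ.le ha)
    (setIntegral_Ioi_rpow_mul_exp_neg_sq_div_log_le hc hγ hD)

end

theorem stmt_17 :
    ∃ C : ℝ, 0 < C ∧ ∀ ξ : ℝ, 1 < ξ → ∀ ε : ℝ, 0 < ε → ε < 1 / 2 →
      ∃ γ₀ : ℝ, 0 < γ₀ ∧ ∀ γ : ℝ, 0 < γ → γ < γ₀ → γ < 1 →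
        ∫ w in Set.Ioi (0 : ℝ), w * Real.exp (-w ^ 2) / Real.log (ξ ^ 2 + w ^ 2 / γ)
          ≤ C * (γ ^ (2 * ε) / Real.log (ξ ^ 2) + 1 / ((1 - 2 * ε) * Real.log (1 / γ))) := by
  refine ⟨1, one_pos, fun ξ hξ ε _ hε ↦ ⟨1, one_pos, fun γ hγ hγ1 _ ↦ ?_⟩⟩
  have hc : 1 < ξ ^ 2 := by nlinarith
  have hlog : 0 < log (ξ ^ 2) := log_pos hc
  have hD : 0 < (1 - 2 * ε) * log (1 / γ) :=
    mul_pos (by linarith) (log_pos (by rw [lt_div_iff₀ hγ]; linarith))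
  refine (integral_mul_exp_neg_sq_div_log_le hc hγ hD).trans ?_
  rw [one_mul]
  exact add_le_add (div_le_div_of_nonneg_left (by positivity) hlog (by linarith))
    (div_le_div_of_nonneg_left zero_le_one hD (by linarith))
end
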